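/- arXiv:2405.04153 — 7 statements merged into one kernel-verified Lean document; each statement's English description precedes it below -/
import Mathlib

section
/- Let W be a finite-dimensional real vector space, v_i (i ∈ I) finitely many vectors in W, and λ ∈ ℝ_{≥0}{v_i}. Let I' be the support of a representation λ = ∑ λ_i v_i with λ_i ≥ 0 maximizing the number of positive coefficients. If λ = ∑_{i∈I} λ'_i v_i with real coefficients λ'_i satisfying λ'_i ≥ 0 for all i ∉ I', then λ'_i = 0 for all i ∉ I'. -/
/-- Let `W` be a finite-dimensional real vector space, `v i` (`i ∈ I`) finitely many
vectors, and `lam ∈ ℝ_{≥0}{v i}`.  Let `I' = {i | 0 < c i}` be the support of a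
representation `lam = ∑ i, c i • v i` with `c i ≥ 0` maximizing the number of positive
coefficients.  If `lam = ∑ i, c' i • v i` with real coefficients `c' i` satisfying
`c' i ≥ 0` for all `i ∉ I'`, then `c' i = 0` for all `i ∉ I'`. -/
theorem positive_envelope_vanishing {W : Type*} [AddCommGroup W] [Module ℝ W]
    [FiniteDimensional ℝ W] {I : Type*} [Fintype I] (v : I → W) (lam : W)
    (c : I → ℝ) (hc0 : ∀ i, 0 ≤ c i) (hc : lam = ∑ i, c i • v i)
    (hmax : ∀ d : I → ℝ, (∀ i, 0 ≤ d i) → lam = ∑ i, d i • v i →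
      Nat.card {i : I // 0 < d i} ≤ Nat.card {i : I // 0 < c i})
    (c' : I → ℝ) (hc' : lam = ∑ i, c' i • v i)
    (hc'0 : ∀ i, i ∉ {i : I | 0 < c i} → 0 ≤ c' i) :
    ∀ i, i ∉ {i : I | 0 < c i} → c' i = 0 := by
  intro j hj
  by_contra hne
  have hjc : ¬ 0 < c j := hj
  have hcj : c j = 0 := le_antisymm (not_lt.mp hjc) (hc0 j)
  have hj' : 0 < c' j := lt_of_le_of_ne (hc'0 j hj) (Ne.symm hne)
  haveI : Nonempty I := ⟨j⟩
  set f : I → ℝ := fun i => if 0 < c i ∧ c' i < c i then c i / (c i - c' i) else 1 with hf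
  have hfpos : ∀ i, 0 < f i := by
    intro i; rw [hf]; dsimp only
    split
    · next h => exact div_pos h.1 (by linarith [h.2])
    · norm_num
  have hne' : (Finset.univ : Finset I).Nonempty := Finset.univ_nonempty
  have hinfpos : 0 < Finset.univ.inf' hne' f := by
    obtain ⟨i, _, hi⟩ := Finset.exists_mem_eq_inf' hne' f
    rw [hi]; exact hfpos i
  set ε : ℝ := (Finset.univ.inf' hne' f) / 2 with hε
  have hεpos : 0 < ε := half_pos hinfpos
  have hεlt : ∀ i, ε < f i := fun i =>
    lt_of_lt_of_le (half_lt_self hinfpos) (Finset.inf'_le _ (Finset.mem_univ i))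
  set d : I → ℝ := fun i => (1 - ε) * c i + ε * c' i with hd
  have hdpos : ∀ i, 0 < c i → 0 < d i := by
    intro i hi
    rw [hd]; dsimp only
    by_cases h : c' i < c i
    · have hfi : f i = c i / (c i - c' i) := by rw [hf]; simp [hi, h]
      have := hεlt i
      rw [hfi, lt_div_iff₀ (by linarith : (0:ℝ) < c i - c' i)] at this
      nlinarith
    · nlinarith [not_lt.mp h, hεpos]
  have hd0 : ∀ i, 0 ≤ d i := by
    intro i
    by_cases hi : 0 < c i
    · exact (hdpos i hi).le
    · have : c i = 0 := le_antisymm (not_lt.mp hi) (hc0 i)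
      have hci' : 0 ≤ c' i := hc'0 i hi
      rw [hd]; dsimp only; rw [this]
      nlinarith
  have hdsum : lam = ∑ i, d i • v i := by
    have : ∑ i, d i • v i = (1 - ε) • (∑ i, c i • v i) + ε • (∑ i, c' i • v i) := by
      rw [Finset.smul_sum, Finset.smul_sum, ← Finset.sum_add_distrib]
      apply Finset.sum_congr rfl
      intro i _
      rw [hd]; dsimp only
      rw [add_smul, mul_smul, mul_smul]
    rw [this, ← hc, ← hc', ← add_smul]
    simp
  have hcard := hmax d hd0 hdsum
  have hsub : Finset.univ.filter (fun i => 0 < c i) ⊂ Finset.univ.filter (fun i => 0 < d i) := by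
    rw [Finset.ssubset_iff_of_subset]
    · refine ⟨j, ?_, ?_⟩
      · simp only [Finset.mem_filter, Finset.mem_univ, true_and]
        rw [hd]; dsimp only; rw [hcj]
        nlinarith
      · simp [hjc]
    · intro i hi
      simp only [Finset.mem_filter, Finset.mem_univ, true_and] at hi ⊢
      exact hdpos i hi
  have hlt : (Finset.univ.filter (fun i => 0 < c i)).card <
      (Finset.univ.filter (fun i => 0 < d i)).card := Finset.card_lt_card hsub
  rw [Nat.card_eq_fintype_card, Nat.card_eq_fintype_card, Fintype.card_subtype,
    Fintype.card_subtype] at hcard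
  omega
end

section
/- Let W be a finite-dimensional real vector space, v_i (i ∈ I) finitely many vectors, λ ∈ ℝ_{≥0}{v_i}, and I' the positive envelope of λ (the support of a nonnegative representation of λ with maximal number of positive coefficients). Then for any i ∈ I, if v_i lies in the linear span of {v_j : j ∈ I'}, then i ∈ I'. -/
/-! If `v i = ∑_{j ∈ I'} a j • v j` with `c i = 0`, then for small `ε > 0` the coefficients
`c + ε • (δ_i - a)` still represent `lam`, stay nonnegative, and are positive on `I' ∪ {i}`,
contradicting the maximality of `I'`. -/

open Filter Topology Submodule

lemma exists_pos_forall_mul_lt {I : Type*} [Finite I] (a c : I → ℝ) :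
    ∃ ε > 0, ∀ j, 0 < c j → ε * a j < c j := by
  have hsmall : ∀ᶠ ε in 𝓝[>] (0 : ℝ), ∀ j, 0 < c j → ε * a j < c j := by
    refine nhdsWithin_le_nhds (eventually_all.2 fun j => ?_)
    by_cases hj : 0 < c j
    · have hlim : Tendsto (fun ε => ε * a j) (𝓝 0) (𝓝 0) :=
        (continuous_mul_const (a j)).tendsto' 0 0 (zero_mul _)
      filter_upwards [hlim.eventually (gt_mem_nhds hj)] with ε hε _ using hε
    · exact Eventually.of_forall fun _ h => absurd h hj
  obtain ⟨ε, hε, hpos⟩ := (hsmall.and self_mem_nhdsWithin).exists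
  exact ⟨ε, hpos, hε⟩

lemma exists_sum_smul_eq_of_mem_span_image {R M I : Type*} [Semiring R] [AddCommMonoid M]
    [Module R M] [Fintype I] {v : I → M} {s : Set I} {x : M} (hx : x ∈ span R (v '' s)) :
    ∃ a : I → R, (∀ j ∉ s, a j = 0) ∧ ∑ j, a j • v j = x := by
  obtain ⟨l, hl, rfl⟩ := Finsupp.mem_span_image_iff_linearCombination R |>.1 hx
  refine ⟨l, (Finsupp.mem_supported' R l).1 hl, ?_⟩
  exact (Finsupp.sum_fintype l (fun j r => r • v j) fun j => zero_smul R (v j)).symm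

theorem exists_nonneg_sum_smul_eq_of_mem_span_support {W I : Type*} [AddCommGroup W]
    [Module ℝ W] [Fintype I] [DecidableEq I] {v : I → W} {c : I → ℝ} (hc0 : ∀ j, 0 ≤ c j)
    {i : I} (hi : v i ∈ span ℝ (v '' {j | 0 < c j})) (hci : ¬ 0 < c i) :
    ∃ d : I → ℝ, (∀ j, 0 ≤ d j) ∧ ∑ j, d j • v j = ∑ j, c j • v j ∧
      {j | 0 < c j} ⊂ {j | 0 < d j} := by
  obtain ⟨a, ha0, ha⟩ := exists_sum_smul_eq_of_mem_span_image hi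
  obtain ⟨ε, hε, hεc⟩ := exists_pos_forall_mul_lt a c
  set d : I → ℝ := c + ε • (Pi.single i 1 - a)
  have hsum : ∑ j, d j • v j = ∑ j, c j • v j := by
    have ha' : Fintype.linearCombination ℝ v a = v i := ha
    simp only [← Fintype.linearCombination_apply ℝ, d, map_add, map_smul, map_sub,
      Fintype.linearCombination_apply_single, one_smul, ha', sub_self, smul_zero, add_zero]
  have hd_of_pos : ∀ j, 0 < c j → d j = c j - ε * a j := by
    intro j hj
    have hji : j ≠ i := by rintro rfl; exact hci hj
    simp [d, hji, sub_eq_add_neg]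
  have hd_of_not_pos : ∀ j, ¬ 0 < c j → d j = c j + ε * (Pi.single i 1 : I → ℝ) j := by
    intro j hj
    simp [d, ha0 j hj]
  have hdi : 0 < d i := by
    rw [hd_of_not_pos i hci, Pi.single_eq_same]
    linarith [hc0 i]
  refine ⟨d, fun j => ?_, hsum, fun j hj => ?_, fun hsub => hci (hsub hdi)⟩
  · by_cases hj : 0 < c j
    · rw [hd_of_pos j hj]
      linarith [hεc j hj]
    · rw [hd_of_not_pos j hj]
      have hsingle : 0 ≤ (Pi.single i 1 : I → ℝ) := Pi.single_nonneg.2 zero_le_one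
      exact add_nonneg (hc0 j) (mul_nonneg hε.le (hsingle j))
  · rw [Set.mem_ofPred_eq, hd_of_pos j hj]
    linarith [hεc j hj]

theorem positive_envelope_span_mem_general {W : Type*} [AddCommGroup W] [Module ℝ W]
    {I : Type*} [Fintype I] (v : I → W) (lam : W)
    (c : I → ℝ) (hc0 : ∀ i, 0 ≤ c i) (hc : lam = ∑ i, c i • v i)
    (hmax : ∀ d : I → ℝ, (∀ i, 0 ≤ d i) → lam = ∑ i, d i • v i →
      Nat.card {i : I // 0 < d i} ≤ Nat.card {i : I // 0 < c i}) :
    ∀ i : I, v i ∈ Submodule.span ℝ (v '' {j : I | 0 < c j}) → i ∈ {j : I | 0 < c j} := by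
  classical
  intro i hi
  by_contra hci
  obtain ⟨d, hd0, hsum, hsupport⟩ := exists_nonneg_sum_smul_eq_of_mem_span_support hc0 hi hci
  exact (Set.ncard_lt_ncard hsupport).not_ge (hmax d hd0 (hc.trans hsum.symm))

/-- Let `W` be a finite-dimensional real vector space, `v i` (`i ∈ I`) finitely many
vectors, `lam ∈ ℝ_{≥0}{v i}`, and `I' = {i | 0 < c i}` the positive envelope of `lam`
(the support of a nonnegative representation of `lam` with maximal number of positive
coefficients).  Then for any `i ∈ I`, if `v i` lies in the linear span of
`{v j : j ∈ I'}`, then `i ∈ I'`. -/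
theorem positive_envelope_span_mem {W : Type*} [AddCommGroup W] [Module ℝ W]
    [FiniteDimensional ℝ W] {I : Type*} [Fintype I] (v : I → W) (lam : W)
    (c : I → ℝ) (hc0 : ∀ i, 0 ≤ c i) (hc : lam = ∑ i, c i • v i)
    (hmax : ∀ d : I → ℝ, (∀ i, 0 ≤ d i) → lam = ∑ i, d i • v i →
      Nat.card {i : I // 0 < d i} ≤ Nat.card {i : I // 0 < c i}) :
    ∀ i : I, v i ∈ Submodule.span ℝ (v '' {j : I | 0 < c j}) → i ∈ {j : I | 0 < c j} :=
  positive_envelope_span_mem_general v lam c hc0 hc hmax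
end

section
/- Let W be a finite-dimensional real vector space, C ⊆ W a closed cone, and f : W → ℝ a continuous function that is positively 1-homogeneous (f(rv) = r·f(v) for all r > 0, v ∈ W). If f is strictly positive on C \ {0}, then the integral ∫_C e^{-f(x)} dx (with respect to Lebesgue measure on W) is finite. -/
open MeasureTheory

/-- Let `W` be a finite-dimensional real vector space, `C ⊆ W` a closed cone, and
`f : W → ℝ` a continuous positively 1-homogeneous function (`f (r • v) = r * f v` for
`r > 0`).  If `f` is strictly positive on `C \ {0}`, then `∫_C e^{-f}` (with respect to
Lebesgue (Haar) measure on `W`) is finite. -/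
theorem integrable_exp_neg_homogeneous {W : Type*} [NormedAddCommGroup W]
    [NormedSpace ℝ W] [FiniteDimensional ℝ W] [MeasurableSpace W] [BorelSpace W]
    (μ : Measure W) [μ.IsAddHaarMeasure]
    (C : Set W) (hC : IsClosed C) (hcone : ∀ r : ℝ, 0 < r → ∀ x ∈ C, r • x ∈ C)
    (f : W → ℝ) (hf : Continuous f)
    (hhom : ∀ r : ℝ, 0 < r → ∀ v : W, f (r • v) = r * f v)
    (hpos : ∀ x ∈ C, x ≠ 0 → 0 < f x) :
    IntegrableOn (fun x => Real.exp (-f x)) C μ := by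
  -- f 0 = 0
  have hf0 : f 0 = 0 := by
    have := hhom 2 (by norm_num) 0
    rw [smul_zero] at this; linarith
  -- there is ε > 0 with ε * ‖x‖ ≤ f x on C
  obtain ⟨ε, hε, hεle⟩ : ∃ ε : ℝ, 0 < ε ∧ ∀ x ∈ C, ε * ‖x‖ ≤ f x := by
    by_cases hS : (C ∩ Metric.sphere (0 : W) 1).Nonempty
    · have hScomp : IsCompact (C ∩ Metric.sphere (0 : W) 1) :=
        (isCompact_sphere (0 : W) 1).of_isClosed_subset
          (hC.inter Metric.isClosed_sphere) Set.inter_subset_right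
      obtain ⟨x₀, hx₀, hmin⟩ := hScomp.exists_isMinOn hS hf.continuousOn
      have hx₀0 : x₀ ≠ 0 := by
        intro h
        have := hx₀.2
        rw [h, mem_sphere_iff_norm] at this
        simp at this
      refine ⟨f x₀, hpos x₀ hx₀.1 hx₀0, fun x hx => ?_⟩
      rcases eq_or_ne x 0 with rfl | hx0
      · simp [hf0]
      · have hn : (0 : ℝ) < ‖x‖ := norm_pos_iff.2 hx0
        have hu : ‖x‖⁻¹ • x ∈ C ∩ Metric.sphere (0 : W) 1 := by
          refine ⟨hcone _ (inv_pos.2 hn) x hx, ?_⟩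
          rw [mem_sphere_iff_norm, sub_zero, norm_smul, norm_inv, norm_norm,
            inv_mul_cancel₀ hn.ne']
        have h1 : f x₀ ≤ f (‖x‖⁻¹ • x) := hmin hu
        have h2 : f (‖x‖⁻¹ • x) = ‖x‖⁻¹ * f x := hhom _ (inv_pos.2 hn) x
        rw [h2] at h1
        rw [mul_comm]
        calc ‖x‖ * f x₀ ≤ ‖x‖ * (‖x‖⁻¹ * f x) := by
              exact mul_le_mul_of_nonneg_left h1 hn.le
          _ = f x := by field_simp
    · refine ⟨1, one_pos, fun x hx => ?_⟩
      rcases eq_or_ne x 0 with rfl | hx0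
      · simp [hf0]
      · exfalso
        apply hS
        have hn : (0 : ℝ) < ‖x‖ := norm_pos_iff.2 hx0
        refine ⟨‖x‖⁻¹ • x, hcone _ (inv_pos.2 hn) x hx, ?_⟩
        rw [mem_sphere_iff_norm, sub_zero, norm_smul, norm_inv, norm_norm,
          inv_mul_cancel₀ hn.ne']
  -- the dominating function
  set n : ℕ := Module.finrank ℝ W + 1 with hn
  set M : ℝ := Real.exp ε * (n.factorial / ε ^ n) with hM
  have hbound : ∀ x : W, Real.exp (-(ε * ‖x‖)) ≤ M * (1 + ‖x‖) ^ (-(n : ℝ)) := by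
    intro x
    have h1 : (0 : ℝ) < 1 + ‖x‖ := by positivity
    have key : (ε * (1 + ‖x‖)) ^ n / n.factorial ≤ Real.exp (ε * (1 + ‖x‖)) :=
      Real.pow_div_factorial_le_exp _ (by positivity) n
    have h2 : Real.exp (-(ε * (1 + ‖x‖))) ≤ n.factorial / (ε * (1 + ‖x‖)) ^ n := by
      rw [Real.exp_neg, inv_le_iff_one_le_mul₀ (by positivity)]
      rw [div_mul_eq_mul_div, le_div_iff₀ (by positivity), one_mul]
      rw [div_le_iff₀ (by positivity : (0:ℝ) < (n.factorial : ℝ))] at key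
      nlinarith [key]
    have h3 : Real.exp (-(ε * ‖x‖)) = Real.exp ε * Real.exp (-(ε * (1 + ‖x‖))) := by
      rw [← Real.exp_add]; ring_nf
    rw [h3, hM]
    have h4 : ((1 : ℝ) + ‖x‖) ^ (-(n : ℝ)) = ((1 + ‖x‖) ^ n)⁻¹ := by
      rw [← Real.rpow_natCast (1 + ‖x‖) n, ← Real.rpow_neg h1.le]
    have h5 : Real.exp (-(ε * (1 + ‖x‖))) ≤ (n.factorial / ε ^ n) * ((1 + ‖x‖) ^ n)⁻¹ := by
      calc Real.exp (-(ε * (1 + ‖x‖))) ≤ (n.factorial : ℝ) / (ε * (1 + ‖x‖)) ^ n := h2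
        _ = (n.factorial / ε ^ n) * ((1 + ‖x‖) ^ n)⁻¹ := by
            rw [mul_pow]; field_simp
    rw [h4, mul_assoc]
    exact mul_le_mul_of_nonneg_left h5 (Real.exp_pos ε).le
  have hint : Integrable (fun x : W => M * (1 + ‖x‖) ^ (-(n : ℝ))) μ := by
    apply Integrable.const_mul
    exact integrable_one_add_norm (by push_cast [hn]; linarith)
  refine Integrable.mono' hint.integrableOn
    ((hf.neg.rexp).aestronglyMeasurable.restrict) ?_
  rw [ae_restrict_iff' hC.measurableSet]
  filter_upwards with x hx
  rw [Real.norm_eq_abs, abs_of_pos (Real.exp_pos _)]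
  calc Real.exp (-f x) ≤ Real.exp (-(ε * ‖x‖)) := by
        apply Real.exp_le_exp.2; simpa using hεle x hx
    _ ≤ M * (1 + ‖x‖) ^ (-(n : ℝ)) := hbound x
end

section
/- Let W be a finite-dimensional real vector space, C ⊆ W a closed cone, f a continuous positively 1-homogeneous function on W, and λ_j ∈ W* for j in a finite set J. Then the following are equivalent: (a) for all sufficiently large N > 0, the function x ↦ f(x) + N ∑_{j∈J} max(0, -λ_j(x)) is strictly positive on C \ {0}; (b) f is strictly positive on {x ∈ C : λ_j(x) ≥ 0 for all j ∈ J} \ {0}. -/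
/-- Let `W` be a finite-dimensional real vector space, `C ⊆ W` a closed cone, `f` a
continuous positively 1-homogeneous function on `W`, and `lam j ∈ W*` for `j` in a finite
set `J`.  Then the following are equivalent:
(a) for all sufficiently large `N > 0`, the function
    `x ↦ f x + N * ∑ j, max 0 (-(lam j x))` is strictly positive on `C \ {0}`;
(b) `f` is strictly positive on `{x ∈ C : lam j x ≥ 0 ∀ j} \ {0}`. -/
theorem homogeneous_positive_penalty_iff {W : Type*} [NormedAddCommGroup W]
    [NormedSpace ℝ W] [FiniteDimensional ℝ W]
    (C : Set W) (hC : IsClosed C) (hcone : ∀ r : ℝ, 0 < r → ∀ x ∈ C, r • x ∈ C)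
    (f : W → ℝ) (hf : Continuous f)
    (hhom : ∀ r : ℝ, 0 < r → ∀ v : W, f (r • v) = r * f v)
    {J : Type*} [Fintype J] (lam : J → (W →ₗ[ℝ] ℝ)) :
    (∃ N₀ : ℝ, 0 < N₀ ∧ ∀ N : ℝ, N₀ ≤ N → ∀ x ∈ C, x ≠ 0 →
        0 < f x + N * ∑ j, max 0 (-(lam j x)))
    ↔ (∀ x ∈ C, (∀ j, 0 ≤ lam j x) → x ≠ 0 → 0 < f x) := by
  classical
  set g : W → ℝ := fun x => ∑ j, max 0 (-(lam j x)) with hg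
  have hgcont : Continuous g :=
    continuous_finset_sum _ fun j _ =>
      continuous_const.max (lam j).continuous_of_finiteDimensional.neg
  have hgnn : ∀ x, 0 ≤ g x := fun x => Finset.sum_nonneg fun j _ => le_max_left _ _
  have hghom : ∀ r : ℝ, 0 < r → ∀ x, g (r • x) = r * g x := by
    intro r hr x
    simp only [hg]
    rw [Finset.mul_sum]
    refine Finset.sum_congr rfl fun j _ => ?_
    rw [map_smul, smul_eq_mul, ← mul_neg, mul_max_of_nonneg _ _ hr.le, mul_zero]
  have hgzero : ∀ x, g x = 0 → ∀ j, 0 ≤ lam j x := by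
    intro x hx j
    have h0 : max 0 (-(lam j x)) = 0 :=
      (Finset.sum_eq_zero_iff_of_nonneg
        (fun j _ => le_max_left 0 (-(lam j x)))).mp hx j (Finset.mem_univ j)
    have h1 : -(lam j x) ≤ 0 := by
      by_contra h
      push_neg at h
      rw [max_eq_right h.le] at h0
      linarith
    linarith
  constructor
  · rintro ⟨N₀, hN₀, h⟩ x hx hlam hx0
    have hx' := h N₀ le_rfl x hx hx0
    have hz : g x = 0 := by
      apply Finset.sum_eq_zero
      intro j _
      simp [max_eq_left, neg_nonpos.mpr (hlam j)]
    have hz' : (∑ j : J, max 0 (-(lam j x))) = 0 := hz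
    rw [hz'] at hx'
    linarith
  · intro hb
    set S : Set W := C ∩ Metric.sphere 0 1 with hS
    have hScomp : IsCompact S := (isCompact_sphere (0 : W) 1).inter_left hC
    set T : Set W := S ∩ f ⁻¹' Set.Iic 0 with hT
    have hTcomp : IsCompact T := hScomp.inter_right (isClosed_Iic.preimage hf)
    have hTg : ∀ x ∈ T, 0 < g x := by
      rintro x ⟨⟨hxC, hxs⟩, hxf⟩
      rcases (hgnn x).lt_or_eq with h | h
      · exact h
      · exfalso
        have hx0 : x ≠ 0 := by
          intro h0
          rw [h0] at hxs
          simp at hxs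
        have hfx : 0 < f x := hb x hxC (hgzero x h.symm) hx0
        have hfx' : f x ≤ 0 := hxf
        linarith
    have key : ∃ N₀ : ℝ, 0 < N₀ ∧ ∀ N, N₀ ≤ N → ∀ u ∈ S, 0 < f u + N * g u := by
      by_cases hTe : T.Nonempty
      · obtain ⟨e0, he0T, he0min⟩ := hTcomp.exists_isMinOn hTe hgcont.continuousOn
        have hε : 0 < g e0 := hTg _ he0T
        have hSne : S.Nonempty := ⟨e0, he0T.1⟩
        obtain ⟨m0, hm0S, hm0⟩ := hScomp.exists_isMinOn hSne hf.continuousOn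
        refine ⟨max 1 ((1 + |f m0|) / g e0), lt_of_lt_of_le one_pos (le_max_left _ _), ?_⟩
        intro N hN u huS
        have hN1 : (1 : ℝ) ≤ N := le_trans (le_max_left _ _) hN
        by_cases hfu : 0 < f u
        · have hN0 : 0 ≤ N * g u := mul_nonneg (by linarith) (hgnn u)
          linarith
        · push_neg at hfu
          have huT : u ∈ T := ⟨huS, hfu⟩
          have h1 : g e0 ≤ g u := he0min huT
          have h2 : f m0 ≤ f u := hm0 huS
          have hN2 : (1 + |f m0|) / g e0 ≤ N := le_trans (le_max_right _ _) hN
          have h3 : 1 + |f m0| ≤ N * g e0 := (div_le_iff₀ hε).mp hN2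
          have h4 : N * g e0 ≤ N * g u := mul_le_mul_of_nonneg_left h1 (by linarith)
          have h5 : -|f m0| ≤ f m0 := neg_abs_le _
          linarith
      · refine ⟨1, one_pos, ?_⟩
        intro N hN u huS
        have hfu : 0 < f u := by
          by_contra h
          push_neg at h
          exact hTe ⟨u, huS, h⟩
        have : 0 ≤ N * g u := mul_nonneg (by linarith) (hgnn u)
        linarith
    obtain ⟨N₀, hN₀, hkey⟩ := key
    refine ⟨N₀, hN₀, ?_⟩
    intro N hN x hxC hx0
    have hr : 0 < ‖x‖ := norm_pos_iff.mpr hx0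
    set u := ‖x‖⁻¹ • x with hu
    have huC : u ∈ C := hcone _ (inv_pos.mpr hr) x hxC
    have hus : u ∈ Metric.sphere (0 : W) 1 := by
      simp [hu, norm_smul, abs_of_pos (inv_pos.mpr hr), inv_mul_cancel₀ hr.ne']
    have hxu : x = ‖x‖ • u := by
      rw [hu, smul_smul, mul_inv_cancel₀ hr.ne', one_smul]
    have e1 := hhom ‖x‖ hr u
    rw [← hxu] at e1
    have e2 := hghom ‖x‖ hr u
    rw [← hxu] at e2
    have hpos := hkey N hN u ⟨huC, hus⟩
    have := mul_pos hr hpos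
    have e3 : (∑ j : J, max 0 (-(lam j x))) = ‖x‖ * g u := e2
    rw [e1, e3]
    nlinarith
end

section
/- Let χ_i (i ∈ I) and λ_j (j ∈ J) be finite families of linear functionals on a finite-dimensional real vector space W, and f a continuous positively 1-homogeneous function on W. Let C ⊆ W be a closed polyhedral cone. Assume f is strictly positive on {x ∈ C : λ_j(x) ≥ 0 ∀ j ∈ J} \ {0}. Then there exists c > 0 such that for all sufficiently large N, the integral ∫_C exp(−f(x) − N ∑_{j∈J} max(0, −λ_j(x)) − ∑_{i∈I} σ_i χ_i(x)) dx converges for all real σ_i with |σ_i| < c. -/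
open MeasureTheory

lemma integrable_exp_neg_mul_norm' {W : Type*} [NormedAddCommGroup W]
    [NormedSpace ℝ W] [FiniteDimensional ℝ W] [MeasurableSpace W] [BorelSpace W]
    (μ : Measure W) [μ.IsAddHaarMeasure] {a : ℝ} (ha : 0 < a) :
    Integrable (fun x : W => Real.exp (-(a * ‖x‖))) μ := by
  set r : ℝ := Module.finrank ℝ W + 1 with hrdef
  have hr : (Module.finrank ℝ W : ℝ) < r := lt_add_one _
  have hr0 : (0:ℝ) < r := by positivity
  have key := integrable_one_add_norm (E := W) (μ := μ) hr
  set b : ℝ := min 1 (a / r) with hbdef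
  have hb : 0 < b := lt_min one_pos (div_pos ha hr0)
  have hb1 : b ≤ 1 := min_le_left _ _
  have hbr : r * b ≤ a := by
    have h := min_le_right 1 (a / r)
    calc r * b ≤ r * (a / r) := by nlinarith
    _ = a := by field_simp
  refine (key.const_mul (b ^ (-r))).mono' ?_ (ae_of_all _ fun x => ?_)
  · exact (Real.continuous_exp.comp
      (continuous_const.mul continuous_norm).neg).aestronglyMeasurable
  · set t := ‖x‖ with htdef
    have ht : 0 ≤ t := norm_nonneg x
    have h1t : (0:ℝ) < 1 + t := by linarith
    rw [Real.norm_eq_abs, abs_of_pos (Real.exp_pos _)]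
    have hbi : 1 ≤ b⁻¹ := (one_le_inv_iff₀).2 ⟨hb, hb1⟩
    have hbb : b⁻¹ * b = 1 := inv_mul_cancel₀ hb.ne'
    have step1 : 1 + t ≤ b⁻¹ * Real.exp (b * t) := by
      have h1 : b * t + 1 ≤ Real.exp (b * t) := by
        have := Real.add_one_le_exp (b * t); linarith
      nlinarith [mul_le_mul_of_nonneg_left h1 (inv_pos.2 hb).le]
    have step2 : (1 + t) ^ r ≤ b ^ (-r) * Real.exp (a * t) := by
      have h2 : (1 + t) ^ r ≤ (b⁻¹ * Real.exp (b * t)) ^ r :=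
        Real.rpow_le_rpow h1t.le step1 hr0.le
      have h3 : (b⁻¹ * Real.exp (b * t)) ^ r
          = b ^ (-r) * Real.exp (b * t * r) := by
        rw [Real.mul_rpow (inv_nonneg.2 hb.le) (Real.exp_pos _).le,
          Real.inv_rpow hb.le, ← Real.rpow_neg hb.le, ← Real.exp_mul]
      have h4 : Real.exp (b * t * r) ≤ Real.exp (a * t) := by
        apply Real.exp_le_exp.2; nlinarith
      have hK : 0 < b ^ (-r) := Real.rpow_pos_of_pos hb _
      calc (1 + t) ^ r ≤ b ^ (-r) * Real.exp (b * t * r) := by rw [← h3]; exact h2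
        _ ≤ b ^ (-r) * Real.exp (a * t) := by nlinarith
    have hP : 0 < (1 + t) ^ r := Real.rpow_pos_of_pos h1t r
    have hK : 0 < b ^ (-r) := Real.rpow_pos_of_pos hb _
    have hE : 0 < Real.exp (a * t) := Real.exp_pos _
    rw [Real.rpow_neg h1t.le, Real.exp_neg]
    have : 1 / Real.exp (a * t) ≤ (b ^ (-r)) / ((1 + t) ^ r) := by
      rw [div_le_div_iff₀ hE hP]; nlinarith
    calc (Real.exp (a * t))⁻¹ = 1 / Real.exp (a * t) := (one_div _).symm
      _ ≤ (b ^ (-r)) / ((1 + t) ^ r) := this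
      _ = b ^ (-r) * ((1 + t) ^ r)⁻¹ := div_eq_mul_inv _ _



/-- Let `chi i` (`i ∈ I`) and `lam j` (`j ∈ J`) be finite families of linear functionals
on a finite-dimensional real vector space `W`, and `f` a continuous positively
1-homogeneous function on `W`.  Let `C ⊆ W` be a closed polyhedral cone (cut out by
finitely many linear functionals `g k`).  Assume `f` is strictly positive on
`{x ∈ C : lam j x ≥ 0 ∀ j} \ {0}`.  Then there exists `c > 0` such that for all
sufficiently large `N`, the integral
`∫_C exp (−f x − N ∑_j max 0 (−lam j x) − ∑_i σ i * chi i x) dx`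
converges for all real `σ` with `|σ i| < c`. -/
theorem convergence_lemma_polyhedral {W : Type*} [NormedAddCommGroup W]
    [NormedSpace ℝ W] [FiniteDimensional ℝ W] [MeasurableSpace W] [BorelSpace W]
    (μ : Measure W) [μ.IsAddHaarMeasure]
    {I J K : Type*} [Fintype I] [Fintype J] [Fintype K]
    (chi : I → (W →ₗ[ℝ] ℝ)) (lam : J → (W →ₗ[ℝ] ℝ))
    (f : W → ℝ) (hf : Continuous f)
    (hhom : ∀ r : ℝ, 0 < r → ∀ v : W, f (r • v) = r * f v)
    (g : K → (W →ₗ[ℝ] ℝ)) (C : Set W) (hC : C = {x : W | ∀ k, 0 ≤ g k x})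
    (hpos : ∀ x ∈ C, (∀ j, 0 ≤ lam j x) → x ≠ 0 → 0 < f x) :
    ∃ c : ℝ, 0 < c ∧ ∃ N₀ : ℝ, ∀ N : ℝ, N₀ ≤ N → ∀ σ : I → ℝ, (∀ i, |σ i| < c) →
      IntegrableOn
        (fun x => Real.exp (-f x - N * ∑ j, max 0 (-(lam j x)) - ∑ i, σ i * chi i x))
        C μ := by
  -- basic continuity facts
  have hlamc : ∀ j, Continuous (lam j) := fun j => (lam j).continuous_of_finiteDimensional
  have hchic : ∀ i, Continuous (chi i) := fun i => (chi i).continuous_of_finiteDimensional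
  have hgc : ∀ k, Continuous (g k) := fun k => (g k).continuous_of_finiteDimensional
  set h : W → ℝ := fun x => ∑ j, max 0 (-(lam j x)) with hhdef
  have hhcont : Continuous h :=
    continuous_finset_sum _ fun j _ => continuous_const.max (hlamc j).neg
  have hhnn : ∀ x, 0 ≤ h x := fun x =>
    Finset.sum_nonneg fun j _ => le_max_left _ _
  have hhhom : ∀ r : ℝ, 0 < r → ∀ x : W, h (r • x) = r * h x := by
    intro r hr x
    simp only [hhdef, Finset.mul_sum]
    refine Finset.sum_congr rfl fun j _ => ?_
    rw [_root_.map_smul, smul_eq_mul, mul_max_of_nonneg _ _ hr.le, mul_zero, mul_neg]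
  have hf0 : f 0 = 0 := by
    have := hhom 2 two_pos 0
    simp only [smul_zero] at this; linarith
  have hCclosed : IsClosed C := by
    rw [hC, Set.setOf_forall]
    exact isClosed_iInter fun k => isClosed_le continuous_const (hgc k)
  have hCcone : ∀ x ∈ C, ∀ r : ℝ, 0 < r → r • x ∈ C := by
    intro x hx r hr
    rw [hC] at hx ⊢
    intro k
    rw [_root_.map_smul, smul_eq_mul]
    exact mul_nonneg hr.le (hx k)
  -- Step 1: ∃ δ > 0, N₁ : ℕ, ∀ x ∈ C, δ * ‖x‖ ≤ f x + N₁ * h x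
  obtain ⟨δ, hδ, N₁, hbound⟩ :
      ∃ δ : ℝ, 0 < δ ∧ ∃ N₁ : ℕ, ∀ x ∈ C, δ * ‖x‖ ≤ f x + N₁ * h x := by
    set S : Set W := C ∩ Metric.sphere 0 1 with hSdef
    have hScomp : IsCompact S :=
      (isCompact_sphere (0:W) 1).inter_left hCclosed
    by_cases hne : S.Nonempty
    · -- cover by opens
      set U : ℕ → Set W := fun n => {x | 0 < f x + n * h x} with hUdef
      have hUopen : ∀ n : ℕ, IsOpen (U n) :=
        fun n => isOpen_lt continuous_const (hf.add (continuous_const.mul hhcont))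
      have hcover : S ⊆ ⋃ n, U n := by
        intro x hx
        rcases hx with ⟨hxC, hxS⟩
        have hxne : x ≠ 0 := by
          intro h0; rw [mem_sphere_iff_norm, h0] at hxS; simp at hxS
        by_cases hh0 : h x = 0
        · have hlam : ∀ j, 0 ≤ lam j x := by
            intro j
            have := (Finset.sum_eq_zero_iff_of_nonneg
              (fun j _ => le_max_left 0 (-(lam j x)))).1 hh0 j (Finset.mem_univ j)
            by_contra hneg
            push_neg at hneg
            rw [max_eq_right (by linarith)] at this
            linarith
          have := hpos x hxC hlam hxne
          exact Set.mem_iUnion.2 ⟨0, by simpa [hUdef] using this⟩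
        · have hhp : 0 < h x := lt_of_le_of_ne (hhnn x) (Ne.symm hh0)
          obtain ⟨n, hn⟩ := exists_nat_ge ((1 - f x) / h x)
          refine Set.mem_iUnion.2 ⟨n, ?_⟩
          have : (1 - f x) / h x * h x ≤ n * h x :=
            mul_le_mul_of_nonneg_right hn (hhnn x)
          rw [div_mul_cancel₀ _ hhp.ne'] at this
          simp only [hUdef, Set.mem_setOf_eq]; linarith
      obtain ⟨t, ht⟩ := hScomp.elim_finite_subcover U hUopen hcover
      set N₁ : ℕ := t.sup id with hN₁def
      have hSU : ∀ x ∈ S, 0 < f x + N₁ * h x := by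
        intro x hx
        obtain ⟨n, hnt, hxn⟩ := by
          simpa using ht hx
        have hnN : (n : ℝ) ≤ N₁ := by
          exact_mod_cast Finset.le_sup (f := id) hnt
        have : 0 < f x + n * h x := hxn
        nlinarith [hhnn x]
      -- min over compact
      obtain ⟨x₀, hx₀S, hx₀min'⟩ := hScomp.exists_isMinOn hne
        ((hf.add (continuous_const.mul hhcont)).continuousOn)
      have hx₀min : ∀ y ∈ S, f x₀ + N₁ * h x₀ ≤ f y + N₁ * h y :=
        fun y hy => hx₀min' hy
      set δ := f x₀ + N₁ * h x₀ with hδdef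
      have hδpos : 0 < δ := hSU x₀ hx₀S
      refine ⟨δ, hδpos, N₁, fun x hxC => ?_⟩
      by_cases hx0 : x = 0
      · simp [hx0, hf0, show h (0:W) = 0 by simp [hhdef]]
      · have hnx : 0 < ‖x‖ := norm_pos_iff.2 hx0
        set y := ‖x‖⁻¹ • x with hydef
        have hyC : y ∈ C := hCcone x hxC _ (inv_pos.2 hnx)
        have hyS : y ∈ S := by
          refine ⟨hyC, ?_⟩
          rw [mem_sphere_iff_norm, sub_zero, hydef, norm_smul, norm_inv,
            norm_norm, inv_mul_cancel₀ hnx.ne']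
        have h1 : δ ≤ f y + N₁ * h y := hx₀min y hyS
        have h2 : f y = ‖x‖⁻¹ * f x := hhom _ (inv_pos.2 hnx) x
        have h3 : h y = ‖x‖⁻¹ * h x := hhhom _ (inv_pos.2 hnx) x
        rw [h2, h3] at h1
        have := mul_le_mul_of_nonneg_left h1 hnx.le
        have hc : ‖x‖ * (‖x‖⁻¹ * f x) = f x := by field_simp
        have hc2 : ‖x‖ * ((N₁:ℝ) * (‖x‖⁻¹ * h x)) = N₁ * h x := by field_simp
        nlinarith [this]
    · -- S empty: C ⊆ {0}
      refine ⟨1, one_pos, 0, fun x hxC => ?_⟩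
      by_cases hx0 : x = 0
      · simp [hx0, hf0, show h (0:W) = 0 by simp [hhdef]]
      · exfalso
        apply hne
        have hnx : 0 < ‖x‖ := norm_pos_iff.2 hx0
        refine ⟨‖x‖⁻¹ • x, hCcone x hxC _ (inv_pos.2 hnx), ?_⟩
        rw [mem_sphere_iff_norm, sub_zero, norm_smul, norm_inv, norm_norm,
          inv_mul_cancel₀ hnx.ne']
  -- Step 2: choose c
  set chiL : I → (W →L[ℝ] ℝ) := fun i => LinearMap.toContinuousLinearMap (chi i)
    with hchiLdef
  set B : ℝ := ∑ i, ‖chiL i‖ with hBdef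
  have hB : 0 ≤ B := Finset.sum_nonneg fun i _ => norm_nonneg _
  set c : ℝ := δ / (2 * (B + 1)) with hcdef
  have hc : 0 < c := div_pos hδ (by linarith)
  have hcB : c * B ≤ δ / 2 := by
    have h1 : c * (B + 1) = δ / 2 := by
      rw [hcdef]; field_simp
    nlinarith
  refine ⟨c, hc, N₁, fun N hN σ hσ => ?_⟩
  have hσbound : ∀ x : W, |∑ i, σ i * chi i x| ≤ δ / 2 * ‖x‖ := by
    intro x
    calc |∑ i, σ i * chi i x| ≤ ∑ i, |σ i * chi i x| := Finset.abs_sum_le_sum_abs _ _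
      _ ≤ ∑ i, c * (‖chiL i‖ * ‖x‖) := by
          refine Finset.sum_le_sum fun i _ => ?_
          rw [abs_mul]
          refine mul_le_mul (hσ i).le ?_ (abs_nonneg _) hc.le
          have := (chiL i).le_opNorm x
          simpa [hchiLdef] using this
      _ = c * B * ‖x‖ := by
          simp only [hBdef, Finset.mul_sum, Finset.sum_mul, mul_assoc]
      _ ≤ δ / 2 * ‖x‖ := mul_le_mul_of_nonneg_right hcB (norm_nonneg x)
  -- exponent bound on C
  have hexp : ∀ x ∈ C,
      -f x - N * h x - ∑ i, σ i * chi i x ≤ -(δ / 2 * ‖x‖) := by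
    intro x hx
    have h1 : δ * ‖x‖ ≤ f x + N₁ * h x := hbound x hx
    have h2 : (N₁:ℝ) * h x ≤ N * h x := mul_le_mul_of_nonneg_right hN (hhnn x)
    have h3 := hσbound x
    have h4 : -(δ / 2 * ‖x‖) ≤ -∑ i, σ i * chi i x + δ/2*‖x‖ - δ/2*‖x‖ - δ/2*‖x‖ + δ/2*‖x‖ := by
      have := abs_le.1 h3
      linarith [this.1]
    have := (abs_le.1 h3).1
    linarith
  -- integrability
  have hint : Integrable (fun x : W => Real.exp (-(δ/2 * ‖x‖))) μ :=
    integrable_exp_neg_mul_norm' μ (by linarith)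
  have hcont : Continuous
      (fun x => Real.exp (-f x - N * ∑ j, max 0 (-(lam j x)) - ∑ i, σ i * chi i x)) := by
    apply Real.continuous_exp.comp
    exact (hf.neg.sub (continuous_const.mul hhcont)).sub
      (continuous_finset_sum _ fun i _ => continuous_const.mul (hchic i))
  refine (hint.integrableOn).mono' hcont.aestronglyMeasurable.restrict ?_
  refine (ae_restrict_iff' hCclosed.measurableSet).2 (ae_of_all _ fun x hx => ?_)
  rw [Real.norm_eq_abs, abs_of_pos (Real.exp_pos _)]
  exact Real.exp_le_exp.2 (hexp x hx)
end

section
/- In the setting of the previous lemma (f a polynomial relative invariant of weight ψ, U a sum of weight spaces with f|_U ≢ 0), there exists a sum of weight spaces U' ⊆ U such that f|_{U'} ≢ 0 and ψ ∈ ℝ_{>0}Ψ_{U'}, i.e., ψ is a linear combination of the weights of U' with all coefficients strictly positive. -/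
/-!
Choose a monomial `X^m` of `f` that survives the restriction to `U`. The torus scales `X^m` by
the character `∑ⱼ mⱼ wtⱼ` and `f` by `ψ`, so relative invariance forces `ψ = ∑ⱼ mⱼ wtⱼ` with
`mⱼ ≥ 0`. Take for `U'` the sum of the weight spaces met by the support of `m`: the restriction of
`f` to `U'` still contains `X^m`, and spreading the mass of `m` evenly over each weight class
turns `ψ = ∑ⱼ mⱼ wtⱼ` into a combination with strictly positive coefficients on all of `U'`.
-/

open MvPolynomial Finset

namespace MvPolynomial

variable {R σ : Type*} [CommSemiring R]

theorem coeff_aeval_smul_X (g : σ → R) (f : MvPolynomial σ R) (m : σ →₀ ℕ) :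
    coeff m (aeval (fun j => g j • X j) f) = (m.prod fun j e => g j ^ e) * coeff m f := by
  classical
  induction f using MvPolynomial.induction_on' with
  | add p q hp hq => rw [map_add, coeff_add, coeff_add, hp, hq, mul_add]
  | monomial m' c =>
    have hmon : aeval (fun j => g j • X j) (monomial m' c)
        = monomial m' (c * m'.prod fun j e => g j ^ e) := by
      rw [aeval_monomial, monomial_eq, C_mul, map_finsuppProd, mul_assoc, ← Finsupp.prod_mul]
      simp only [smul_eq_C_mul, mul_pow, algebraMap_eq, C_pow]
    rw [hmon, coeff_monomial, coeff_monomial]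
    split_ifs with h
    · rw [h, mul_comm]
    · rw [mul_zero]

theorem coeff_aeval_ite_X [DecidableEq σ] (S : Finset σ) (f : MvPolynomial σ R)
    (m : σ →₀ ℕ) :
    coeff m (aeval (fun j => if j ∈ S then X j else 0) f)
      = if m.support ⊆ S then coeff m f else 0 := by
  have hite : (fun j => if j ∈ S then (X j : MvPolynomial σ R) else 0)
      = fun j => (if j ∈ S then 1 else 0 : R) • X j := by
    funext j
    split_ifs <;> simp
  rw [hite, coeff_aeval_smul_X, Finsupp.prod]
  split_ifs with hS
  · rw [prod_eq_one fun j hj => by rw [if_pos (hS hj), one_pow], one_mul]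
  · obtain ⟨j, hjm, hjS⟩ := not_subset.1 hS
    have hmj : m j ≠ 0 := Finsupp.mem_support_iff.1 hjm
    rw [prod_eq_zero hjm (by rw [if_neg hjS, zero_pow hmj]), zero_mul]

end MvPolynomial

namespace Finset

variable {ι κ 𝕜 : Type*} [DecidableEq κ] [Field 𝕜]

def fiberAverage (s : Finset ι) (lab : ι → κ) (m : ι → 𝕜) (k : κ) : 𝕜 :=
  (∑ j ∈ s with lab j = k, m j) / #{j ∈ s | lab j = k}

theorem sum_fiberAverage_smul [CharZero 𝕜] {M : Type*} [AddCommGroup M] [Module 𝕜 M]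
    (s : Finset ι) (lab : ι → κ) (m : ι → 𝕜) (v : κ → M) :
    ∑ j ∈ s, fiberAverage s lab m (lab j) • v (lab j) = ∑ j ∈ s, m j • v (lab j) := by
  rw [sum_comp (fun k => fiberAverage s lab m k • v k),
    ← sum_fiberwise_of_maps_to fun j => mem_image_of_mem lab]
  refine sum_congr rfl fun k hk => ?_
  obtain ⟨j₀, hj₀, rfl⟩ := mem_image.1 hk
  have hcard : (#{j ∈ s | lab j = lab j₀} : 𝕜) ≠ 0 :=
    Nat.cast_ne_zero.2 (card_ne_zero_of_mem (mem_filter.2 ⟨hj₀, rfl⟩))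
  rw [← Nat.cast_smul_eq_nsmul 𝕜, smul_smul, fiberAverage, mul_div_cancel₀ _ hcard, sum_smul]
  exact sum_congr rfl fun j hj => by rw [(mem_filter.1 hj).2]

theorem fiberAverage_pos [LinearOrder 𝕜] [IsStrictOrderedRing 𝕜] {s : Finset ι}
    {lab : ι → κ} {m : ι → 𝕜} (hm : ∀ j ∈ s, 0 ≤ m j) {j : ι} {k : κ} (hj : j ∈ s)
    (hlab : lab j = k) (hpos : 0 < m j) : 0 < fiberAverage s lab m k := by
  have hjk : j ∈ s.filter (lab · = k) := mem_filter.2 ⟨hj, hlab⟩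
  exact div_pos (sum_pos' (fun i hi => hm i (mem_filter.1 hi).1) ⟨j, hjk, hpos⟩)
    (Nat.cast_pos.2 (card_pos.2 ⟨j, hjk⟩))

end Finset

theorem Finset.prod_zpow_eq_zpow_sum {G ι : Type*} [CommGroup G] (s : Finset ι) (e : ι → ℤ)
    (u : G) : ∏ j ∈ s, u ^ e j = u ^ ∑ j ∈ s, e j := by
  have h := map_prod (zpowersHom G u) (fun j => Multiplicative.ofAdd (e j)) s
  rw [← ofAdd_sum] at h
  simpa only [zpowersHom_apply, toAdd_ofAdd] using h.symm

theorem two_zpow_injective {F : Type*} [DivisionRing F] [CharZero F] :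
    Function.Injective fun n : ℤ => (2 : F) ^ n := by
  intro a b h
  have hℚ : (((2 : ℚ) ^ a : ℚ) : F) = (((2 : ℚ) ^ b : ℚ) : F) := by
    push_cast
    exact h
  exact zpow_right_injective₀ (by norm_num) (by norm_num) (Rat.cast_injective hℚ)

def IsRelativeInvariant {F J ι : Type*} [Field F] [Fintype ι] (wt : J → ι → ℤ) (ψ : ι → ℤ)
    (f : MvPolynomial J F) : Prop :=
  ∀ t : ι → Fˣ,
    aeval (fun j => (↑(∏ i, t i ^ wt j i) : F) • X j) f = (↑(∏ i, t i ^ ψ i) : F) • f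

theorem IsRelativeInvariant.sum_smul_weight_eq {F J ι : Type*} [Field F] [CharZero F]
    [Fintype ι] {wt : J → ι → ℤ} {ψ : ι → ℤ} {f : MvPolynomial J F}
    (hf : IsRelativeInvariant wt ψ f) {m : J →₀ ℕ} (hm : coeff m f ≠ 0) :
    (m.sum fun j e => e • wt j) = ψ := by
  classical
  funext i
  -- test the invariance on the one-parameter subgroup through `2` in the `i`-th coordinate
  let u : Fˣ := Units.mk0 2 two_ne_zero
  have hsingle : ∀ w : ι → ℤ, ∏ i', Pi.mulSingle i u i' ^ w i' = u ^ w i := fun w => by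
    rw [Fintype.prod_eq_single i fun i' hi' => by rw [Pi.mulSingle_eq_of_ne hi', one_zpow],
      Pi.mulSingle_eq_same]
  have hcoeff := congrArg (coeff m) (hf (Pi.mulSingle i u))
  simp only [hsingle, coeff_aeval_smul_X, coeff_smul, smul_eq_mul] at hcoeff
  have hchar : (m.prod fun j e => ((u ^ wt j i : Fˣ) : F) ^ e) = ((u ^ ψ i : Fˣ) : F) :=
    mul_right_cancel₀ hm hcoeff
  have hval : ∀ n : ℤ, ((u ^ n : Fˣ) : F) = 2 ^ n := fun n => by
    rw [Units.val_zpow_eq_zpow_val, Units.val_mk0]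
  apply two_zpow_injective (F := F)
  simp only [← hval, ← hchar, Finsupp.sum, Finsupp.prod, Finset.sum_apply, ← prod_zpow_eq_zpow_sum,
    Units.coe_prod, nsmul_eq_mul, Pi.mul_apply, Pi.natCast_apply, zpow_mul', zpow_natCast,
    Units.val_pow_eq_pow_val]

theorem relative_invariant_weight_positive_combination_general
    {F : Type*} [Field F] [CharZero F] {J : Type*} [Fintype J] [DecidableEq J] {r : ℕ}
    (wt : J → (Fin r → ℤ)) (ψ : Fin r → ℤ)
    (f : MvPolynomial J F)
    (hrel : ∀ t : Fin r → Fˣ,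
      aeval (fun j : J => (↑(∏ i, t i ^ wt j i) : F) • (X j : MvPolynomial J F)) f
        = (↑(∏ i, t i ^ ψ i) : F) • f)
    (S : Finset J) (hSweight : ∀ j ∈ S, ∀ j' : J, wt j' = wt j → j' ∈ S)
    (hfU : aeval (fun j : J => if j ∈ S then (X j : MvPolynomial J F) else 0) f ≠ 0) :
    ∃ S' : Finset J, S' ⊆ S ∧ (∀ j ∈ S', ∀ j' : J, wt j' = wt j → j' ∈ S') ∧
      aeval (fun j : J => if j ∈ S' then (X j : MvPolynomial J F) else 0) f ≠ 0 ∧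
      ∃ c : J → ℝ, (∀ j ∈ S', 0 < c j) ∧
        (fun i : Fin r => (ψ i : ℝ)) = ∑ j ∈ S', c j • (fun i : Fin r => (wt j i : ℝ)) := by
  obtain ⟨m, hm⟩ := exists_coeff_ne_zero hfU
  rw [coeff_aeval_ite_X] at hm
  obtain ⟨hmS, hmf⟩ : m.support ⊆ S ∧ coeff m f ≠ 0 := by
    split_ifs at hm with h
    exacts [⟨h, hm⟩, absurd rfl hm]
  set S' : Finset J := {j | wt j ∈ m.support.image wt}
  have hmS' : m.support ⊆ S' := fun j hj => mem_filter.2 ⟨mem_univ j, mem_image_of_mem wt hj⟩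
  have hψ : (fun i => (ψ i : ℝ)) = ∑ j ∈ S', (m j : ℝ) • fun i => (wt j i : ℝ) := by
    rw [← IsRelativeInvariant.sum_smul_weight_eq hrel hmf,
      Finsupp.sum_of_support_subset m hmS' (fun j e => e • wt j) fun _ _ => zero_smul _ _]
    funext i
    simp
  refine ⟨S', fun j hj => ?_,
    fun j hj j' hw => mem_filter.2 ⟨mem_univ j', hw ▸ (mem_filter.1 hj).2⟩,
    ?_, fun j => S'.fiberAverage wt (m ·) (wt j), fun j hj => ?_, ?_⟩
  · obtain ⟨j', hj', hw⟩ := mem_image.1 (mem_filter.1 hj).2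
    exact hSweight j' (hmS hj') j hw.symm
  · exact ne_of_apply_ne (coeff m) (by rwa [coeff_zero, coeff_aeval_ite_X, if_pos hmS'])
  · obtain ⟨j', hj', hw⟩ := mem_image.1 (mem_filter.1 hj).2
    exact fiberAverage_pos (fun _ _ => Nat.cast_nonneg _) (hmS' hj') hw
      (Nat.cast_pos.2 (Nat.pos_of_ne_zero (Finsupp.mem_support_iff.1 hj')))
  · exact hψ.trans (sum_fiberAverage_smul S' wt _ fun w i => (w i : ℝ)).symm

/-- In the setting of the previous lemma (a split torus `T₀ ≅ 𝔾ₘʳ` acting on `V` with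
weight basis indexed by `J`, `f` a polynomial relative invariant of weight `ψ`, and `U` a
sum of weight spaces given by a weight-closed subset `S` of the basis with `f|_U ≢ 0`),
there exists a sum of weight spaces `U' ⊆ U` (given by a weight-closed subset `S' ⊆ S`)
such that `f|_{U'} ≢ 0` and `ψ ∈ ℝ_{>0} Ψ_{U'}`, i.e. `ψ` is a linear combination of the
weights of `U'` with all coefficients strictly positive. -/
theorem relative_invariant_weight_positive_combination
    {F : Type*} [Field F] [CharZero F] {J : Type*} [Fintype J] [DecidableEq J] {r : ℕ}
    (wt : J → (Fin r → ℤ)) (ψ : Fin r → ℤ)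
    (f : MvPolynomial J F) (hf : f ≠ 0)
    (hrel : ∀ t : Fin r → Fˣ,
      aeval (fun j : J => (↑(∏ i, t i ^ wt j i) : F) • (X j : MvPolynomial J F)) f
        = (↑(∏ i, t i ^ ψ i) : F) • f)
    (S : Finset J) (hSweight : ∀ j ∈ S, ∀ j' : J, wt j' = wt j → j' ∈ S)
    (hfU : aeval (fun j : J => if j ∈ S then (X j : MvPolynomial J F) else 0) f ≠ 0) :
    ∃ S' : Finset J, S' ⊆ S ∧ (∀ j ∈ S', ∀ j' : J, wt j' = wt j → j' ∈ S') ∧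
      aeval (fun j : J => if j ∈ S' then (X j : MvPolynomial J F) else 0) f ≠ 0 ∧
      ∃ c : J → ℝ, (∀ j ∈ S', 0 < c j) ∧
        (fun i : Fin r => (ψ i : ℝ)) = ∑ j ∈ S', c j • (fun i : Fin r => (wt j i : ℝ)) :=
  relative_invariant_weight_positive_combination_general wt ψ f hrel S hSweight hfU
end

section
/- Let G be a connected reductive group acting on a finite-dimensional vector space V over an algebraically closed field of characteristic 0, with maximal torus T₀, root decomposition Lie(G) = ⊕_{α ∈ Φ_G ∪ {0}} g_α and weight decomposition V = ⊕_{β ∈ Ψ_V} V_β. Let U be a sum of weight spaces containing a point v₀ of the open orbit (so the map D_{v₀} : Lie(G) → V, x ↦ dρ(x)v₀, is surjective). Then there exists an injective function ι from an index set of the weights of V (counted with multiplicity dim V_β) into an index set of the roots of G (counted with multiplicity dim g_α, including 0 with multiplicity dim g_0) such that β_j + α_{ι(j)} ∈ Ψ_U for every j. -/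
/-- Let `G` be connected reductive acting on `V` with maximal torus `T₀`, root
decomposition `Lie(G) = ⊕ g_α` and weight decomposition `V = ⊕ V_β`.  We work in
coordinates: `IG` indexes a basis of `Lie(G)` adapted to the root decomposition (the basis
vector `i` lying in the root space of `α i`; roots are counted with multiplicity
`dim g_α`, and `0` occurs with multiplicity `dim g_0`), and `JV` indexes a weight basis of
`V` (the basis vector `j` having weight `β j`).  Since `G` is reductive, the multiset of
roots is symmetric: there is an involution-like bijection `negI` with `α (negI i) = -α i`.
Let `U` be a sum of weight spaces, with weight set `ΨU`, containing a point `v₀` of the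
open orbit, so that the map `D = D_{v₀} : Lie(G) → V`, `x ↦ dρ(x) v₀`, is surjective; the
weight compatibility `dρ(g_α) V_β ⊆ V_{α+β}` and `v₀ ∈ U` give that the matrix entry of
`D` at `(j, i)` vanishes unless `β j - α i ∈ ΨU`.  Then there exists an injective function
`ι : JV → IG` such that `β j + α (ι j) ∈ ΨU` for every `j`. -/
theorem exists_injective_root_shift {F : Type*} [Field F] {W : Type*} [AddCommGroup W]
    {IG JV : Type*} [Fintype IG] [Fintype JV] [DecidableEq IG]
    (α : IG → W) (β : JV → W)
    (negI : IG ≃ IG) (hneg : ∀ i, α (negI i) = -α i)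
    (ΨU : Set W)
    (D : (IG → F) →ₗ[F] (JV → F))
    (hsurj : Function.Surjective D)
    (hweight : ∀ (j : JV) (i : IG), D (Pi.single i 1) j ≠ 0 → β j - α i ∈ ΨU) :
    ∃ ι : JV → IG, Function.Injective ι ∧ ∀ j, β j + α (ι j) ∈ ΨU := by
  classical
  set r : JV → IG → F := fun j i => D (Pi.single i 1) j with hr
  -- D x j = ∑ i, x i * r j i
  have hDx : ∀ (x : IG → F) (j : JV), D x j = ∑ i, x i * r j i := by
    intro x j
    conv_lhs => rw [pi_eq_sum_univ x]
    rw [map_sum]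
    simp only [Finset.sum_apply]
    congr 1; ext i
    have he : (fun j => if i = j then (1:F) else 0) = Pi.single i 1 := by
      ext k; simp [Pi.single_apply, eq_comm]
    rw [he, map_smul]
    simp [r, smul_eq_mul]
  -- rows are linearly independent
  have hLI : LinearIndependent F r := by
    rw [linearIndependent_iff']
    intro s g hsum j0 hj0
    set c : JV → F := fun j => if j ∈ s then g j else 0 with hc
    obtain ⟨x, hx⟩ := hsurj (Pi.single j0 1)
    have key : ∑ j, c j * D x j = c j0 := by
      rw [hx]
      rw [Finset.sum_eq_single j0]
      · simp
      · intro b _ hb; simp [Pi.single_apply, hb]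
      · simp
    have key2 : ∑ j, c j * D x j = 0 := by
      have hz : ∀ i, ∑ j, c j * r j i = 0 := by
        intro i
        have := congrFun hsum i
        simp only [Finset.sum_apply, Pi.smul_apply, smul_eq_mul, Pi.zero_apply] at this
        rw [← this]
        simp only [hc, ite_mul, zero_mul, Finset.sum_ite_mem, Finset.univ_inter]
      calc ∑ j, c j * D x j = ∑ j, c j * ∑ i, x i * r j i := by
            simp only [hDx]
        _ = ∑ i, x i * ∑ j, c j * r j i := by
            simp_rw [Finset.mul_sum]
            rw [Finset.sum_comm]
            congr 1; ext i; congr 1; ext j; ring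
        _ = 0 := by simp [hz]
    have : c j0 = 0 := by rw [← key, key2]
    simpa [hc, hj0] using this
  -- choose nonzero entries injectively via Hall's theorem
  set t : JV → Finset IG := fun j => Finset.univ.filter (fun i => r j i ≠ 0) with ht
  have hall : ∀ s : Finset JV, s.card ≤ (s.biUnion t).card := by
    intro s
    set B := s.biUnion t with hB
    let E : (B → F) →ₗ[F] (IG → F) :=
      { toFun := fun y i => if h : i ∈ B then y ⟨i, h⟩ else 0
        map_add' := by intro y z; ext i; by_cases h : i ∈ B <;> simp [h]
        map_smul' := by intro c y; ext i; by_cases h : i ∈ B <;> simp [h] }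
    have hEq : ∀ j : s, E (fun b : B => r j b) = r j := by
      intro j
      ext i
      by_cases h : i ∈ B
      · simp [E, h]
      · have hnt : i ∉ t (j : JV) := fun hi => h (Finset.mem_biUnion.mpr ⟨j, j.2, hi⟩)
        have : ¬ (r (j : JV) i ≠ 0) := by
          intro hne; exact hnt (by simp [ht, hne])
        simp only [E, LinearMap.coe_mk, AddHom.coe_mk, dif_neg h]
        exact (not_not.mp this).symm
    have hqLI : LinearIndependent F (fun j : s => fun b : B => r j b) := by
      apply LinearIndependent.of_comp E
      have : (⇑E ∘ fun j : s => fun b : B => r j b) = fun j : s => r j := by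
        ext j i; rw [Function.comp_apply, hEq j]
      rw [this]
      exact hLI.comp _ Subtype.coe_injective
    have hcard := hqLI.fintype_card_le_finrank
    simpa [Module.finrank_pi] using hcard
  obtain ⟨f, hfinj, hf⟩ := (Finset.all_card_le_biUnion_card_iff_exists_injective t).mp hall
  refine ⟨fun j => negI (f j), fun a b hab => hfinj (negI.injective hab), fun j => ?_⟩
  have hne : r j (f j) ≠ 0 := by
    have := hf j
    simpa [ht] using this
  have := hweight j (f j) hne
  rw [hneg]
  simpa [sub_eq_add_neg] using this
end
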